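/- Given POVM decoding operators {E_m} (0 ≤ E_m, ∑_m E_m ≤ 𝟙) and encodings satisfying 𝒟 ∘ ℰ_m = 𝒟, if the average success probability (1/M)∑_m tr(ℰ_m(ρ) E_m) ≥ 1 − ε, then the test Q = ∑_m |m⟩⟨m| ⊗ E_m applied to ζ = (1/M)∑_m |m⟩⟨m| ⊗ 𝒟(ρ) yields tr(Qζ) = 1/M, and consequently log M ≤ D_H^ε(τ ‖ ζ) where τ = (1/M)∑_m |m⟩⟨m| ⊗ ℰ_m(ρ). -/

import Mathlib

open Matrix
open scoped ComplexOrder ENNReal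

/-- Hypothesis testing relative entropy
`D_H^ε(ρ‖σ) = -log inf{tr(Qσ) : 0 ≤ Q ≤ 𝟙, tr(Qρ) ≥ 1-ε}` (valued in `EReal`,
so that an empty/vanishing infimum yields `+∞`). -/
noncomputable def DH {n : Type*} [Fintype n] [DecidableEq n] (ε : ℝ)
    (ρ σ : Matrix n n ℂ) : EReal :=
  - ENNReal.log (sInf {x : ℝ≥0∞ | ∃ Q : Matrix n n ℂ, Q.PosSemidef ∧
      (1 - Q).PosSemidef ∧ 1 - ε ≤ ((Q * ρ).trace).re ∧
      x = ENNReal.ofReal ((Q * σ).trace).re})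

/-!
The block test `Q = ∑ₘ |m⟩⟨m| ⊗ E_m` satisfies `0 ≤ Q ≤ 𝟙` because the `E_m` form a POVM. Its
acceptance probability on `τ` is exactly the average success probability, while on `ζ` all
blocks carry the same state `𝒟(ρ)`, so completeness `∑ₘ E_m = 𝟙` collapses `tr(Qζ)` to `1/M`.
Hence `Q` is feasible in the infimum defining `D_H^ε(τ‖ζ)`, which is therefore at most `1/M`.
-/

namespace Matrix

section BlockDiagonalFst

variable {o m n α : Type*} [DecidableEq o]

/-- `∑ₖ |k⟩⟨k| ⊗ A k`, i.e. `blockDiagonal` with the block index as the first coordinate. -/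
def blockDiagonalFst [Zero α] (A : o → Matrix m n α) : Matrix (o × m) (o × n) α :=
  (blockDiagonal A).submatrix Prod.swap Prod.swap

theorem blockDiagonalFst_apply [Zero α] (A : o → Matrix m n α) (p : o × m) (q : o × n) :
    blockDiagonalFst A p q = if p.1 = q.1 then A p.1 p.2 q.2 else 0 :=
  rfl

theorem blockDiagonalFst_mul [Fintype o] [Fintype n] [NonUnitalNonAssocSemiring α]
    {l : Type*} (A : o → Matrix m n α) (B : o → Matrix n l α) :
    blockDiagonalFst A * blockDiagonalFst B = blockDiagonalFst fun k => A k * B k :=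
  (submatrix_mul_equiv (blockDiagonal A) (blockDiagonal B) Prod.swap (Equiv.prodComm o n)
    Prod.swap).trans (congrArg (submatrix · Prod.swap Prod.swap) (blockDiagonal_mul A B).symm)

theorem trace_blockDiagonalFst [Fintype o] [Fintype m] [AddCommMonoid α]
    (A : o → Matrix m m α) : trace (blockDiagonalFst A) = ∑ k, trace (A k) := by
  simp [trace, blockDiagonalFst_apply, Fintype.sum_prod_type]

theorem one_sub_blockDiagonalFst [DecidableEq m] [AddGroupWithOne α] (A : o → Matrix m m α) :
    1 - blockDiagonalFst A = blockDiagonalFst fun k => 1 - A k := by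
  ext ⟨k, i⟩ ⟨k', j⟩
  by_cases h : k = k' <;> simp [blockDiagonalFst_apply, one_apply, h]

open scoped MatrixOrder Matrix.Norms.L2Operator in
theorem PosSemidef.blockDiagonalFst [Fintype o] [Fintype m] {𝕜 : Type*} [RCLike 𝕜]
    {A : o → Matrix m m 𝕜} (hA : ∀ k, (A k).PosSemidef) :
    (Matrix.blockDiagonalFst A).PosSemidef := by
  classical
  choose B hB using fun k => CStarAlgebra.nonneg_iff_eq_star_mul_self.mp (hA k).nonneg
  have : (blockDiagonal A).PosSemidef := by
    simpa [funext hB, star_eq_conjTranspose, blockDiagonal_mul] using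
      posSemidef_conjTranspose_mul_self (blockDiagonal B)
  exact this.submatrix _

end BlockDiagonalFst

theorem posSemidef_one_sub_of_sum_eq_one {n ι R : Type*} [Fintype n] [DecidableEq n]
    [Fintype ι] [DecidableEq ι] [Ring R] [PartialOrder R] [StarRing R] [AddLeftMono R]
    {E : ι → Matrix n n R} (hE : ∀ i, (E i).PosSemidef) (hsum : ∑ i, E i = 1) (i : ι) :
    (1 - E i).PosSemidef := by
  rw [← hsum, ← Finset.add_sum_erase _ _ (Finset.mem_univ i), add_sub_cancel_left]
  exact posSemidef_sum _ fun j _ => hE j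

end Matrix

theorem neg_log_trace_mul_le_DH {n : Type*} [Fintype n] [DecidableEq n] {ε : ℝ}
    {ρ σ Q : Matrix n n ℂ} (hQ : Q.PosSemidef) (hQ₁ : (1 - Q).PosSemidef)
    (hρ : 1 - ε ≤ (Q * ρ).trace.re) :
    -ENNReal.log (ENNReal.ofReal (Q * σ).trace.re) ≤ DH ε ρ σ :=
  EReal.neg_le_neg_iff.mpr (ENNReal.log_monotone (sInf_le ⟨Q, hQ, hQ₁, hρ, rfl⟩))

theorem converse_bound_general {M d : ℕ} (hM : 0 < M) (ε : ℝ)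
    (ℰ : Fin M → Matrix (Fin d) (Fin d) ℂ → Matrix (Fin d) (Fin d) ℂ)
    (𝒟 : Matrix (Fin d) (Fin d) ℂ → Matrix (Fin d) (Fin d) ℂ)
    (ρ : Matrix (Fin d) (Fin d) ℂ)
    (h𝒟tr : (𝒟 ρ).trace = 1)
    (E : Fin M → Matrix (Fin d) (Fin d) ℂ)
    (hEpos : ∀ m, (E m).PosSemidef)
    (hEsum : ∑ m, E m = 1)
    (hsucc : 1 - ε ≤ (M : ℝ)⁻¹ * ∑ m, (((ℰ m ρ) * E m).trace).re) :
    let Q : Matrix (Fin M × Fin d) (Fin M × Fin d) ℂ :=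
      Matrix.of fun p q => if p.1 = q.1 then E p.1 p.2 q.2 else 0
    let τ : Matrix (Fin M × Fin d) (Fin M × Fin d) ℂ :=
      ((M : ℂ))⁻¹ • Matrix.of fun p q => if p.1 = q.1 then ℰ p.1 ρ p.2 q.2 else 0
    let ζ : Matrix (Fin M × Fin d) (Fin M × Fin d) ℂ :=
      ((M : ℂ))⁻¹ • Matrix.of fun p q => if p.1 = q.1 then 𝒟 ρ p.2 q.2 else 0
    (Q * ζ).trace = ((M : ℂ))⁻¹ ∧ (Real.log M : EReal) ≤ DH ε τ ζ := by
  intro Q τ ζ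
  have hQ : Q = blockDiagonalFst E := rfl
  have hτ : τ = (M : ℂ)⁻¹ • blockDiagonalFst fun m => ℰ m ρ := rfl
  have hζ : ζ = (M : ℂ)⁻¹ • blockDiagonalFst fun _ => 𝒟 ρ := rfl
  have hMinv : (M : ℂ)⁻¹ = ((M : ℝ)⁻¹ : ℝ) := by push_cast; rfl
  have hQ₀ : Q.PosSemidef := PosSemidef.blockDiagonalFst hEpos
  have hQ₁ : (1 - Q).PosSemidef := by
    rw [hQ, one_sub_blockDiagonalFst]
    exact PosSemidef.blockDiagonalFst (posSemidef_one_sub_of_sum_eq_one hEpos hEsum)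
  have hQτ : 1 - ε ≤ (Q * τ).trace.re := by
    rw [hQ, hτ, Matrix.mul_smul, trace_smul, blockDiagonalFst_mul, trace_blockDiagonalFst,
      smul_eq_mul, hMinv, Complex.re_ofReal_mul, Complex.re_sum]
    simpa only [trace_mul_comm (E _)] using hsucc
  have hQζ : (Q * ζ).trace = (M : ℂ)⁻¹ := by
    rw [hQ, hζ, Matrix.mul_smul, trace_smul, blockDiagonalFst_mul, trace_blockDiagonalFst,
      ← trace_sum, ← Finset.sum_mul, hEsum, one_mul, h𝒟tr, smul_eq_mul, mul_one]
  refine ⟨hQζ, ?_⟩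
  calc (Real.log M : EReal)
      = -ENNReal.log (ENNReal.ofReal (Q * ζ).trace.re) := by
        rw [hQζ, hMinv, Complex.ofReal_re, ENNReal.log_ofReal_of_pos (by positivity),
          Real.log_inv, EReal.coe_neg, neg_neg]
    _ ≤ DH ε τ ζ := neg_log_trace_mul_le_DH hQ₀ hQ₁ hQτ

/-- converse bound. Given a POVM decoder `{E_m}` and encodings with
`𝒟 ∘ ℰ_m = 𝒟`, an average success probability `≥ 1-ε` forces
`tr(Qζ) = 1/M` for the block test `Q = ∑_m |m⟩⟨m| ⊗ E_m` and hence
`log M ≤ D_H^ε(τ‖ζ)`. -/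
theorem converse_bound {M d : ℕ} (hM : 0 < M) (ε : ℝ)
    (ℰ : Fin M → Matrix (Fin d) (Fin d) ℂ → Matrix (Fin d) (Fin d) ℂ)
    (𝒟 : Matrix (Fin d) (Fin d) ℂ → Matrix (Fin d) (Fin d) ℂ)
    (hDE : ∀ m, 𝒟 ∘ ℰ m = 𝒟)
    (ρ : Matrix (Fin d) (Fin d) ℂ) (hρ : ρ.PosSemidef) (htr : ρ.trace = 1)
    (h𝒟tr : (𝒟 ρ).trace = 1)
    (E : Fin M → Matrix (Fin d) (Fin d) ℂ)
    (hEpos : ∀ m, (E m).PosSemidef)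
    (hEsum : ∑ m, E m = 1)
    (hsucc : 1 - ε ≤ (M : ℝ)⁻¹ * ∑ m, (((ℰ m ρ) * E m).trace).re) :
    let Q : Matrix (Fin M × Fin d) (Fin M × Fin d) ℂ :=
      Matrix.of fun p q => if p.1 = q.1 then E p.1 p.2 q.2 else 0
    let τ : Matrix (Fin M × Fin d) (Fin M × Fin d) ℂ :=
      ((M : ℂ))⁻¹ • Matrix.of fun p q => if p.1 = q.1 then ℰ p.1 ρ p.2 q.2 else 0
    let ζ : Matrix (Fin M × Fin d) (Fin M × Fin d) ℂ :=
      ((M : ℂ))⁻¹ • Matrix.of fun p q => if p.1 = q.1 then 𝒟 ρ p.2 q.2 else 0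
    (Q * ζ).trace = ((M : ℂ))⁻¹ ∧ (Real.log M : EReal) ≤ DH ε τ ζ :=
  converse_bound_general hM ε ℰ 𝒟 ρ h𝒟tr E hEpos hEsum hsucc
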